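/- arXiv:math/0409400 — 2 statements merged into one kernel-verified Lean document; each statement's English description precedes it below -/
import Mathlib

section
/- Let S be a rational partial polyhedral decomposition, and T ⊂ S a nonempty subset satisfying condition (α) (closedness under cones having a member as a face). For cones τ_0, ..., τ_p ∈ T, the intersection (τ_0 ∩ ... ∩ τ_p) ∩ D is contractible if τ_0 ∩ ... ∩ τ_p ∈ T, and empty otherwise, where D = ∪_{τ∈T} τ°. -/
/-!
A point `x` in the relative interior of a cone `μ` of `T` that also lies in `σ = τ₀ ∩ … ∩ τₚ`
lies in the face `μ ∩ σ` of `μ`; a face containing a relative interior point is the whole cone,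
so `μ` is a face of `σ ∈ S`, and condition (α) puts `σ` in `T`. Conversely, when `σ ∈ T`, the
set `σ ∩ D` contains the relative interior of `σ`, and is therefore star-shaped about any
relative interior point of `σ`: the half-open segment from such a point to any point of `σ` stays
in the relative interior.
-/

section Cones

variable {V : Type} [NormedAddCommGroup V] [NormedSpace ℝ V] [FiniteDimensional ℝ V]

/-- `τ` is a face of the convex cone `σ`. -/
def IsFaceOf (τ σ : PointedCone ℝ V) : Prop :=
  (τ : Set V) ⊆ (σ : Set V) ∧
    ∀ x ∈ σ, ∀ y ∈ σ, x + y ∈ τ → x ∈ τ ∧ y ∈ τ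

/-- A cone is polyhedral if it is generated by finitely many vectors. -/
def IsPolyhedralCone (σ : PointedCone ℝ V) : Prop :=
  ∃ s : Finset V, σ = Submodule.span _ (s : Set V)

/-- A cone is salient if it contains no nontrivial linear subspace. -/
def IsSalientCone (σ : PointedCone ℝ V) : Prop :=
  ∀ x ∈ σ, -x ∈ σ → x = 0

end Cones

open Set AffineMap Topology

theorem AffineSubspace.coe_homothety {k V P : Type*} [CommRing k] [AddCommGroup V] [Module k V]
    [AddTorsor V P] {A : AffineSubspace k P} [Nonempty A] (c : A) (r : k) (p : A) :
    ((homothety c r p : A) : P) = homothety (c : P) r (p : P) :=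
  rfl

section IntrinsicInterior

variable {V : Type*} [NormedAddCommGroup V] [NormedSpace ℝ V] {s : Set V} {x y : V}

theorem Convex.homothety_mem_intrinsicInterior (hs : Convex ℝ s)
    (hx : x ∈ intrinsicInterior ℝ s) (hy : y ∈ s) {t : ℝ} (ht : t ∈ Ioc 0 1) :
    homothety y t x ∈ intrinsicInterior ℝ s := by
  obtain ⟨x', hx', rfl⟩ := hx
  let y' : affineSpan ℝ s := ⟨y, subset_affineSpan ℝ s hy⟩
  have : Nonempty (affineSpan ℝ s) := ⟨y'⟩
  have hmaps : MapsTo (homothety y' t) ((↑) ⁻¹' s) ((↑) ⁻¹' s) := fun z hz => by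
    rw [mem_preimage, AffineSubspace.coe_homothety, homothety_eq_lineMap]
    exact hs.lineMap_mem hy hz ⟨ht.1.le, ht.2⟩
  refine ⟨homothety y' t x', ?_, AffineSubspace.coe_homothety _ _ _⟩
  exact interior_mono hmaps.image_subset
    ((homothety_isOpenMap y' t ht.1.ne').image_interior_subset _ (mem_image_of_mem _ hx'))

theorem exists_one_lt_homothety_mem_of_mem_intrinsicInterior
    (hx : x ∈ intrinsicInterior ℝ s) (hy : y ∈ s) :
    ∃ t : ℝ, 1 < t ∧ homothety y t x ∈ s := by
  obtain ⟨x', hx', rfl⟩ := hx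
  let y' : affineSpan ℝ s := ⟨y, subset_affineSpan ℝ s hy⟩
  have : Nonempty (affineSpan ℝ s) := ⟨y'⟩
  obtain ⟨t, ht, hts⟩ := ((eventually_homothety_mem_of_mem_interior ℝ y' hx').filter_mono
    nhdsWithin_le_nhds |>.and self_mem_nhdsWithin).exists (f := 𝓝[>] (1 : ℝ))
  exact ⟨t, hts, ht⟩

theorem Convex.starConvex_inter_of_intrinsicInterior_subset {D : Set V} (hs : Convex ℝ s)
    (hx : x ∈ intrinsicInterior ℝ s) (hD : intrinsicInterior ℝ s ⊆ D) :
    StarConvex ℝ x (s ∩ D) := by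
  intro y hy a b ha hb hab
  rcases ha.eq_or_lt with rfl | ha
  · obtain rfl : b = 1 := by linarith
    simpa using hy
  have hcombo : a • x + b • y = homothety y a x := by
    rw [homothety_apply, vsub_eq_sub, vadd_eq_add, eq_sub_of_add_eq' hab]
    module
  have hmem := hs.homothety_mem_intrinsicInterior hx hy.1 ⟨ha, by linarith⟩
  rw [hcombo]
  exact ⟨intrinsicInterior_subset hmem, hD hmem⟩

end IntrinsicInterior

section Faces

variable {V : Type} [NormedAddCommGroup V] [NormedSpace ℝ V] {ρ μ σ : PointedCone ℝ V} {x : V}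

theorem IsFaceOf.eq_of_mem_intrinsicInterior (hρ : IsFaceOf ρ μ)
    (hxμ : x ∈ intrinsicInterior ℝ (μ : Set V)) (hxρ : x ∈ ρ) : ρ = μ := by
  refine le_antisymm hρ.1 fun y hy => ?_
  obtain ⟨t, ht, hz⟩ := exists_one_lt_homothety_mem_of_mem_intrinsicInterior hxμ hy
  have ht' : 0 < t - 1 := by linarith
  -- `t • x ∈ ρ` splits as `homothety y t x + (t - 1) • y` with both summands in `μ`.
  have hsum : homothety y t x + (t - 1) • y ∈ ρ := by
    rw [homothety_apply, vsub_eq_sub, vadd_eq_add,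
      show t • (x - y) + y + (t - 1) • y = t • x by module]
    exact ρ.smul_mem (by linarith) hxρ
  have hyρ := (hρ.2 _ hz _ (μ.smul_mem ht'.le hy) hsum).2
  simpa [smul_smul, inv_mul_cancel₀ ht'.ne'] using ρ.smul_mem (inv_pos.2 ht').le hyρ

theorem isFaceOf_of_mem_intrinsicInterior_of_mem (hμ : IsFaceOf (μ ⊓ σ) μ)
    (hσ : IsFaceOf (μ ⊓ σ) σ) (hxμ : x ∈ intrinsicInterior ℝ (μ : Set V)) (hxσ : x ∈ σ) :
    IsFaceOf μ σ := by
  rwa [hμ.eq_of_mem_intrinsicInterior hxμ ⟨intrinsicInterior_subset hxμ, hxσ⟩] at hσ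

end Faces

theorem intersection_with_D_contractible_or_empty_general
    {V : Type} [NormedAddCommGroup V] [NormedSpace ℝ V] [FiniteDimensional ℝ V]
    (S T : Set (PointedCone ℝ V))
    (hinter : ∀ σ ∈ S, ∀ σ' ∈ S,
      σ ⊓ σ' ∈ S ∧ IsFaceOf (σ ⊓ σ') σ ∧ IsFaceOf (σ ⊓ σ') σ')
    (hTS : T ⊆ S)
    (hα : ∀ τ ∈ T, ∀ σ ∈ S, IsFaceOf τ σ → σ ∈ T)
    (p : ℕ) (τ : Fin (p + 1) → PointedCone ℝ V) (hτ : ∀ i, τ i ∈ T) :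
    ((⨅ i, τ i) ∈ T →
      ContractibleSpace (((⨅ i, τ i : PointedCone ℝ V) : Set V) ∩
        (⋃ μ ∈ T, intrinsicInterior ℝ (μ : Set V)) : Set V)) ∧
    ((⨅ i, τ i) ∉ T →
      ((⨅ i, τ i : PointedCone ℝ V) : Set V) ∩
        (⋃ μ ∈ T, intrinsicInterior ℝ (μ : Set V)) = ∅) := by
  have hσS : (⨅ i, τ i) ∈ S := InfClosed.iInf_mem_of_nonempty
    (fun a ha b hb => (hinter a ha b hb).1) fun i => hTS (hτ i)
  set σ := ⨅ i, τ i
  constructor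
  · intro hσT
    obtain ⟨x, hx⟩ := Set.Nonempty.intrinsicInterior σ.convex ⟨0, σ.zero_mem⟩
    have hriD : intrinsicInterior ℝ (σ : Set V) ⊆ ⋃ μ ∈ T, intrinsicInterior ℝ (μ : Set V) :=
      fun y hy => mem_iUnion₂.2 ⟨σ, hσT, hy⟩
    exact (σ.convex.starConvex_inter_of_intrinsicInterior_subset hx hriD).contractibleSpace
      ⟨x, intrinsicInterior_subset hx, hriD hx⟩
  · refine fun hσT => eq_empty_iff_forall_notMem.2 ?_
    rintro x ⟨hxσ, hxD⟩
    obtain ⟨μ, hμT, hxμ⟩ := mem_iUnion₂.1 hxD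
    obtain ⟨-, hμ, hσ⟩ := hinter μ (hTS hμT) σ hσS
    exact hσT (hα μ hμT σ hσS (isFaceOf_of_mem_intrinsicInterior_of_mem hμ hσ hxμ hxσ))

/-- Let `S` be a rational partial polyhedral decomposition (a collection of salient
polyhedral cones, containing `{0}`, closed under faces, and such that the intersection of
any two of its cones belongs to `S` and is a common face), and let `T ⊆ S` be a nonempty
subset satisfying condition (α): any cone of `S` having a member of `T` as a face lies
in `T`.  For cones `τ_0, …, τ_p ∈ T`, the intersection `(τ_0 ∩ … ∩ τ_p) ∩ D` is
contractible if `τ_0 ∩ … ∩ τ_p ∈ T`, and empty otherwise, where `D = ⋃_{τ ∈ T} τ°`. -/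
theorem intersection_with_D_contractible_or_empty
    {V : Type} [NormedAddCommGroup V] [NormedSpace ℝ V] [FiniteDimensional ℝ V]
    (S T : Set (PointedCone ℝ V))
    (hpoly : ∀ σ ∈ S, IsPolyhedralCone σ) (hsal : ∀ σ ∈ S, IsSalientCone σ)
    (hzero : (⊥ : PointedCone ℝ V) ∈ S)
    (hfaces : ∀ σ ∈ S, ∀ τ : PointedCone ℝ V, IsFaceOf τ σ → τ ∈ S)
    (hinter : ∀ σ ∈ S, ∀ σ' ∈ S,
      σ ⊓ σ' ∈ S ∧ IsFaceOf (σ ⊓ σ') σ ∧ IsFaceOf (σ ⊓ σ') σ')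
    (hTS : T ⊆ S) (hTne : T.Nonempty)
    (hα : ∀ τ ∈ T, ∀ σ ∈ S, IsFaceOf τ σ → σ ∈ T)
    (p : ℕ) (τ : Fin (p + 1) → PointedCone ℝ V) (hτ : ∀ i, τ i ∈ T) :
    ((⨅ i, τ i) ∈ T →
      ContractibleSpace (((⨅ i, τ i : PointedCone ℝ V) : Set V) ∩
        (⋃ μ ∈ T, intrinsicInterior ℝ (μ : Set V)) : Set V)) ∧
    ((⨅ i, τ i) ∉ T →
      ((⨅ i, τ i : PointedCone ℝ V) : Set V) ∩
        (⋃ μ ∈ T, intrinsicInterior ℝ (μ : Set V)) = ∅) :=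
  intersection_with_D_contractible_or_empty_general S T hinter hTS hα p τ hτ
end

section
/- If a group H acts properly (in the sense of Definition 1bH(a)) on a scheme X separated and locally of finite type over k, and U_1, U_2 are open sub-schemes of X of finite type over k, then the set {γ ∈ H : U_1 ∩ γU_2 ≠ ∅} is finite. -/
open CategoryTheory AlgebraicGeometry

/-- The translate `γ • U` of an open subscheme by a group element acting on a scheme. -/
def schemeTranslate {X : Scheme} {H : Type} [Group H] (ρ : H →* Aut X) (γ : H)
    (U : X.Opens) : X.Opens :=
  (ρ γ⁻¹).hom ⁻¹ᵁ U

/-- The action of `H` on `X` is proper: there is a Zariski covering by open affines `U`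
such that `{γ ∈ H | U ∩ γU ≠ ∅}` is finite for each `U`. -/
def IsProperAction {X : Scheme} {H : Type} [Group H] (ρ : H →* Aut X) : Prop :=
  ∃ (ι : Type) (U : ι → X.Opens), (∀ α, IsAffineOpen (U α)) ∧ (⨆ α, U α) = ⊤ ∧
    ∀ α, {γ : H | U α ⊓ schemeTranslate ρ γ (U α) ≠ ⊥}.Finite

/-! The generic points of irreducible components of `X` are permuted by `H`, are dense, and only
finitely many of them lie in a Noetherian open. If `U ∩ γ • W` is nonempty, density yields such a
point `z ∈ U` with `γ⁻¹ • z ∈ W`; there are finitely many such pairs `(z, w)`, and the `γ` with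
`γ • w = z` form a coset of the stabiliser of `w`, which is finite when `W` belongs to the
proper covering. Quasi-compact opens are covered by finitely many members of that covering. -/

open Topology Pointwise TopologicalSpace

section GenericPoints

variable {α β : Type*} [TopologicalSpace α] [TopologicalSpace β]

lemma mem_genericPoints_iff_forall_specializes [QuasiSober α] {x : α} :
    x ∈ genericPoints α ↔ ∀ y, y ⤳ x → x ⤳ y := by
  constructor
  · intro hx y hyx
    have hmax := hx.2 (isIrreducible_singleton (x := y)).closure
      (specializes_iff_closure_subset.mp hyx)
    exact specializes_iff_mem_closure.mpr (hmax (subset_closure rfl))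
  · intro hx
    obtain ⟨Z, hZ, hxZ⟩ :=
      exists_mem_irreducibleComponents_subset_of_isIrreducible _
        (isIrreducible_singleton (x := x)).closure
    let g := genericPoints.ofComponent ⟨Z, hZ⟩
    have hgZ : closure {g.1} = Z := genericPoints.isGenericPoint_ofComponent ⟨Z, hZ⟩
    have hgx : g.1 ⤳ x := specializes_iff_mem_closure.mpr (hgZ ▸ hxZ (subset_closure rfl))
    have hxZ' : closure {x} = Z :=
      hxZ.antisymm (hgZ ▸ specializes_iff_closure_subset.mp (hx _ hgx))
    show closure {x} ∈ irreducibleComponents α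
    rwa [hxZ']

lemma Homeomorph.apply_mem_genericPoints_iff [QuasiSober α] [QuasiSober β] (e : α ≃ₜ β)
    {x : α} : e x ∈ genericPoints β ↔ x ∈ genericPoints α := by
  simp only [mem_genericPoints_iff_forall_specializes, e.surjective.forall,
    e.isInducing.specializes_iff]

lemma IsOpen.finite_genericPoints_inter [T0Space α] [QuasiSober α] {V : Set α} (hV : IsOpen V)
    [NoetherianSpace V] : (genericPoints α ∩ V).Finite := by
  have : QuasiSober V := hV.isOpenEmbedding_subtypeVal.quasiSober
  refine ((genericPoints.finite (α := V) NoetherianSpace.finite_irreducibleComponents).image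
    Subtype.val).subset ?_
  rintro x ⟨hx, hxV⟩
  refine ⟨⟨x, hxV⟩, ?_, rfl⟩
  rw [mem_genericPoints_iff_forall_specializes] at hx ⊢
  intro y hy
  exact IsInducing.subtypeVal.specializes_iff.mp (hx y (hy.map continuous_subtype_val))

lemma IsCompact.finite_inter_of_forall_finite_inter {ι : Type*} {s K : Set α} {U : ι → Set α}
    (hK : IsCompact K) (hU : ∀ i, IsOpen (U i)) (hKU : K ⊆ ⋃ i, U i)
    (hs : ∀ i, (s ∩ U i).Finite) : (s ∩ K).Finite := by
  obtain ⟨t, ht⟩ := hK.elim_finite_subcover U hU hKU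
  refine (t.finite_toSet.biUnion fun i _ => hs i).subset ?_
  rintro x ⟨hxs, hxK⟩
  obtain ⟨i, hi, hxi⟩ := Set.mem_iUnion₂.mp (ht hxK)
  exact Set.mem_iUnion₂.mpr ⟨i, hi, hxs, hxi⟩

end GenericPoints

lemma finite_setOf_smul_eq {α H : Type*} [Group H] [MulAction H α] {W : Set α}
    (hW : {δ : H | (W ∩ δ • W).Nonempty}.Finite) {w : α} (hw : w ∈ W) (z : α) : {γ : H | γ • w = z}.Finite := by
  rcases Set.eq_empty_or_nonempty {γ : H | γ • w = z} with hempty | ⟨γ₀, hγ₀⟩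
  · simp [hempty]
  refine (hW.image (γ₀ * ·)).subset fun γ hγ => ⟨γ₀⁻¹ * γ, ⟨w, hw, ?_⟩, by simp⟩
  have : (γ₀⁻¹ * γ) • w = w := by
    rw [mul_smul, inv_smul_eq_iff, hγ.out, hγ₀.out]
  exact this ▸ Set.smul_mem_smul_set hw

section ProperAction

variable {α H : Type*} [TopologicalSpace α] [Group H] [MulAction H α] [ContinuousConstSMul H α]

lemma smul_mem_genericPoints_iff [QuasiSober α] (γ : H) {x : α} :
    γ • x ∈ genericPoints α ↔ x ∈ genericPoints α :=
  (Homeomorph.smul γ).apply_mem_genericPoints_iff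

lemma exists_mem_genericPoints_of_inter_smul_nonempty [QuasiSober α] {V W : Set α}
    (hV : IsOpen V) (hW : IsOpen W) {γ : H} (h : (V ∩ γ • W).Nonempty) :
    ∃ z ∈ genericPoints α ∩ V, γ⁻¹ • z ∈ genericPoints α ∩ W := by
  have hdense : Dense (genericPoints α) := dense_iff_closure_eq.mpr genericPoints.closure
  obtain ⟨z, ⟨hzV, hzW⟩, hz⟩ := hdense.inter_open_nonempty _ (hV.inter (hW.smul γ)) h
  exact ⟨z, ⟨hz, hzV⟩, (smul_mem_genericPoints_iff _).mpr hz,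
    Set.mem_smul_set_iff_inv_smul_mem.mp hzW⟩

theorem finite_setOf_inter_smul_nonempty [QuasiSober α] {V W : Set α} (hV : IsOpen V)
    (hW : IsOpen W) (hGV : (genericPoints α ∩ V).Finite) (hGW : (genericPoints α ∩ W).Finite)
    (hWW : {δ : H | (W ∩ δ • W).Nonempty}.Finite) :
    {γ : H | (V ∩ γ • W).Nonempty}.Finite := by
  refine (hGV.biUnion fun z _ => hGW.biUnion fun w hw =>
    finite_setOf_smul_eq hWW hw.2 z).subset fun γ hγ => ?_
  obtain ⟨z, hz, hw⟩ := exists_mem_genericPoints_of_inter_smul_nonempty hV hW hγ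
  exact Set.mem_biUnion hz (Set.mem_biUnion hw (smul_inv_smul γ z))

theorem finite_setOf_inter_smul_nonempty_of_isCompact [QuasiSober α] {ι : Type*}
    {U : ι → Set α} (hU : ∀ i, IsOpen (U i)) (hcover : ⋃ i, U i = Set.univ)
    (hGU : ∀ i, (genericPoints α ∩ U i).Finite)
    (hUU : ∀ i, {δ : H | (U i ∩ δ • U i).Nonempty}.Finite)
    {V W : Set α} (hV : IsCompact V) (hV' : IsOpen V) (hW : IsCompact W) :
    {γ : H | (V ∩ γ • W).Nonempty}.Finite := by
  have hGV := hV.finite_inter_of_forall_finite_inter hU (hcover ▸ Set.subset_univ V) hGU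
  obtain ⟨t, ht⟩ := hW.elim_finite_subcover U hU (hcover ▸ Set.subset_univ W)
  refine (t.finite_toSet.biUnion fun i _ =>
    finite_setOf_inter_smul_nonempty hV' (hU i) hGV (hGU i) (hUU i)).subset ?_
  rintro γ ⟨x, hxV, hxW⟩
  obtain ⟨i, hi, hxi⟩ := Set.mem_iUnion₂.mp (ht (Set.mem_smul_set_iff_inv_smul_mem.mp hxW))
  exact Set.mem_biUnion hi ⟨x, hxV, Set.mem_smul_set_iff_inv_smul_mem.mpr hxi⟩

end ProperAction

namespace AlgebraicGeometry.Scheme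

variable {X : Scheme}

instance : MulAction (Aut X) X where
  smul f x := f.hom x
  one_smul _ := rfl
  mul_smul _ _ _ := rfl

instance : ContinuousConstSMul (Aut X) X :=
  ⟨fun f => f.hom.continuous⟩

end AlgebraicGeometry.Scheme

lemma schemeTranslate_coe {X : Scheme} {H : Type} [Group H] (ρ : H →* Aut X) (γ : H)
    (U : X.Opens) : (schemeTranslate ρ γ U : Set X) = ρ γ • (U : Set X) := by
  rw [← Set.preimage_smul_inv, ← map_inv]
  rfl

lemma AlgebraicGeometry.IsAffineOpen.finite_genericPoints_inter {X : Scheme}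
    [IsLocallyNoetherian X] {U : X.Opens} (hU : IsAffineOpen U) :
    (genericPoints X ∩ U).Finite :=
  have := IsLocallyNoetherian.component_noetherian ⟨U, hU⟩
  have : NoetherianSpace (U : Set X) := noetherianSpace_of_isAffineOpen U hU
  U.isOpen.finite_genericPoints_inter

theorem finite_translates_meeting_of_properAction_general
    (k : Type) [Field k] (X : Scheme) (sX : X ⟶ Spec (CommRingCat.of k))
    [LocallyOfFiniteType sX]
    (H : Type) [Group H] (ρ : H →* Aut X)
    (hproper : IsProperAction ρ)
    (U₁ U₂ : X.Opens) (h₁ : IsCompact (U₁ : Set X)) (h₂ : IsCompact (U₂ : Set X)) :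
    {γ : H | U₁ ⊓ schemeTranslate ρ γ U₂ ≠ ⊥}.Finite := by
  obtain ⟨ι, U, hU_affine, hU_cover, hU_proper⟩ := hproper
  have := LocallyOfFiniteType.isLocallyNoetherian sX
  let _ : MulAction H X := MulAction.compHom X ρ
  have : ContinuousConstSMul H X := ⟨fun γ => continuous_const_smul (ρ γ)⟩
  simp only [TopologicalSpace.Opens.ne_bot_iff_nonempty, TopologicalSpace.Opens.coe_inf,
    schemeTranslate_coe] at hU_proper ⊢
  refine finite_setOf_inter_smul_nonempty_of_isCompact (fun i => (U i).isOpen) ?_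
    (fun i => (hU_affine i).finite_genericPoints_inter) hU_proper h₁ U₁.isOpen h₂
  simpa using congrArg SetLike.coe hU_cover

/-- If a group `H` acts faithfully and properly on a scheme `X` which is separated and
locally of finite type over a field `k`, and `U₁`, `U₂` are open subschemes of `X` of
finite type over `k` (equivalently, quasi-compact), then `{γ ∈ H : U₁ ∩ γU₂ ≠ ∅}`
is finite. -/
theorem finite_translates_meeting_of_properAction
    (k : Type) [Field k] (X : Scheme) (sX : X ⟶ Spec (CommRingCat.of k))
    [IsSeparated sX] [LocallyOfFiniteType sX]
    (H : Type) [Group H] (ρ : H →* Aut X)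
    (hfaithful : Function.Injective ρ)
    (hproper : IsProperAction ρ)
    (U₁ U₂ : X.Opens) (h₁ : IsCompact (U₁ : Set X)) (h₂ : IsCompact (U₂ : Set X)) :
    {γ : H | U₁ ⊓ schemeTranslate ρ γ U₂ ≠ ⊥}.Finite :=
  finite_translates_meeting_of_properAction_general k X sX H ρ hproper U₁ U₂ h₁ h₂
end
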